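/- arXiv:1106.5575 — 2 statements merged into one kernel-verified Lean document; each statement's English description precedes it below -/
import Mathlib

section
/- Let f : ℝ → ℝ be a real-valued Schwartz function. Then lim_{ε→0⁺} −(1/π) ∫_ℝ ∫_ℝ f(u) f(u') (u − u' − iε)^{−2} du' du = (1/π) ∫_{0}^{∞} k |f̂(k)|² dk ≥ 0. -/
/-!
For `ε > 0` the kernel has the Laplace representation
`(x - iε)⁻² = -∫₀^∞ k e^{-εk} e^{-ikx} dk`. Inserting it and applying Fubini twice turns the
regularized double integral into `-∫₀^∞ k e^{-εk} f̂(k) f̂(-k) dk`, and `f̂(-k) = conj (f̂ k)` for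
real `f`, so the integrand is `k e^{-εk} |f̂(k)|² ≥ 0`. Since `f̂` is again a Schwartz function,
`k |f̂(k)|²` is integrable and dominated convergence gives the limit `ε → 0⁺`.
-/

open MeasureTheory Complex Filter

/-- The Fourier transform `f̂(k) = ∫ f(u) e^{−iku} du` of an (integrable)
function `f : ℝ → ℂ`. -/
noncomputable def ft (f : ℝ → ℂ) (k : ℝ) : ℂ :=
  ∫ u : ℝ, f u * Complex.exp (-Complex.I * k * u)

open Set Real ComplexConjugate FourierTransform SchwartzMap

section ExpIntegral

variable {a : ℂ}

lemma integrableOn_mul_cexp_neg_mul_Ioi (ha : 0 < a.re) :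
    IntegrableOn (fun k : ℝ => (k : ℂ) * cexp (-(a * k))) (Ioi 0) := by
  have hreal : IntegrableOn (fun k : ℝ => k * rexp (-a.re * k)) (Ioi 0) := by
    simpa using integrableOn_rpow_mul_exp_neg_mul_rpow (s := 1) (p := 1) (by norm_num)
      (by norm_num) ha
  refine hreal.mono' (by fun_prop) ?_
  filter_upwards [ae_restrict_mem measurableSet_Ioi] with k (hk : 0 < k)
  simp [Complex.norm_exp, abs_of_pos hk]

lemma tendsto_pow_mul_cexp_neg_mul_atTop (ha : 0 < a.re) (n : ℕ) :
    Tendsto (fun k : ℝ => (k : ℂ) ^ n * cexp (-(a * k))) atTop (nhds 0) := by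
  rw [tendsto_zero_iff_norm_tendsto_zero]
  refine (tendsto_rpow_mul_exp_neg_mul_atTop_nhds_zero n a.re ha).congr' ?_
  filter_upwards [eventually_ge_atTop 0] with k hk
  simp [Complex.norm_exp, abs_of_nonneg hk]

lemma integral_mul_cexp_neg_mul_Ioi (ha : 0 < a.re) :
    ∫ k in Ioi (0 : ℝ), (k : ℂ) * cexp (-(a * k)) = (a ^ 2)⁻¹ := by
  have ha0 : a ≠ 0 := by rintro rfl; simp at ha
  have hderiv : ∀ k ∈ Ici (0 : ℝ), HasDerivAt
      (fun k : ℝ => -((k : ℂ) / a + (a ^ 2)⁻¹) * cexp (-(a * k))) (k * cexp (-(a * k))) k := by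
    intro k _
    have hlin : HasDerivAt (fun k : ℝ => -(a * (k : ℂ))) (-a) k := by
      simpa using (hasDerivAt_id (k : ℂ)).comp_ofReal.const_mul (-a)
    refine ((((hasDerivAt_id (k : ℂ)).comp_ofReal.div_const a).add_const
      (a ^ 2)⁻¹).fun_neg.fun_mul hlin.cexp).congr_deriv ?_
    simp only [id]
    field_simp
    ring
  have hlim : Tendsto (fun k : ℝ => -((k : ℂ) / a + (a ^ 2)⁻¹) * cexp (-(a * k))) atTop
      (nhds 0) := by
    have := ((tendsto_pow_mul_cexp_neg_mul_atTop ha 1).div_const a).add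
      ((tendsto_pow_mul_cexp_neg_mul_atTop ha 0).const_mul (a ^ 2)⁻¹)
    simpa [add_mul, div_mul_eq_mul_div] using this.neg
  rw [integral_Ioi_of_hasDerivAt_of_tendsto' hderiv (integrableOn_mul_cexp_neg_mul_Ioi ha) hlim]
  simp

end ExpIntegral

lemma tendsto_setIntegral_exp_neg_mul_smul {E : Type*} [NormedAddCommGroup E] [NormedSpace ℝ E]
    {g : ℝ → E} (hg : IntegrableOn g (Ioi 0)) :
    Tendsto (fun ε : ℝ => ∫ k in Ioi 0, rexp (-(ε * k)) • g k) (nhdsWithin 0 (Ioi 0))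
      (nhds (∫ k in Ioi 0, g k)) := by
  refine tendsto_integral_filter_of_dominated_convergence (fun k => ‖g k‖)
    (Eventually.of_forall fun _ => (by fun_prop : Continuous _).aestronglyMeasurable.smul
      hg.aestronglyMeasurable) ?_ hg.norm
    (ae_of_all _ fun k => by simpa using ((by fun_prop : Continuous fun ε : ℝ =>
      rexp (-(ε * k)) • g k).tendsto 0).mono_left nhdsWithin_le_nhds)
  filter_upwards [self_mem_nhdsWithin] with ε (hε : 0 < ε)
  filter_upwards [ae_restrict_mem measurableSet_Ioi] with k (hk : 0 < k)
  rw [norm_smul, Real.norm_of_nonneg (exp_pos _).le]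
  exact mul_le_of_le_one_left (norm_nonneg _) (exp_le_one_iff.mpr (by nlinarith))

lemma inv_sub_mul_I_sq_eq_neg_integral {ε : ℝ} (hε : 0 < ε) (x : ℝ) :
    (((x : ℂ) - ε * I) ^ 2)⁻¹
      = -∫ k in Ioi (0 : ℝ), (k : ℂ) * cexp (-(ε * k)) * cexp (-I * k * x) := by
  have ha : 0 < (ε + I * x : ℂ).re := by simpa using hε
  have hsq : ((x : ℂ) - ε * I) ^ 2 = -(ε + I * x : ℂ) ^ 2 := by
    linear_combination ((x : ℂ) ^ 2 + (ε : ℂ) ^ 2) * I_mul_I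
  have hexp : ∀ k : ℝ, (k : ℂ) * cexp (-(ε * k)) * cexp (-I * k * x)
      = k * cexp (-((ε + I * x) * k)) := by
    intro k
    rw [mul_assoc, ← Complex.exp_add]
    ring_nf
  simp_rw [hexp, integral_mul_cexp_neg_mul_Ioi ha, hsq, inv_neg]

lemma norm_cexp_neg_I_mul (k u : ℝ) : ‖cexp (-I * k * u)‖ = 1 := by
  simpa [mul_comm, mul_left_comm] using norm_exp_ofReal_mul_I (-(k * u))

lemma norm_ft_le (F : ℝ → ℂ) (k : ℝ) : ‖ft F k‖ ≤ ∫ u, ‖F u‖ :=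
  (norm_integral_le_integral_norm _).trans_eq (by simp_rw [norm_mul, norm_cexp_neg_I_mul, mul_one])

lemma continuous_ft {F : ℝ → ℂ} (hF : Integrable F) : Continuous (ft F) :=
  continuous_of_dominated (fun _ => hF.aestronglyMeasurable.mul (by fun_prop))
    (fun k => ae_of_all _ fun u => by rw [norm_mul, norm_cexp_neg_I_mul, mul_one]) hF.norm
    (ae_of_all _ fun u => by fun_prop)

lemma ft_neg_ofReal (f : ℝ → ℝ) (k : ℝ) :
    ft (fun u => (f u : ℂ)) (-k) = conj (ft (fun u => (f u : ℂ)) k) := by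
  rw [ft, ft, ← integral_conj]
  congr 1 with u
  rw [map_mul, conj_ofReal, ← Complex.exp_conj]
  simp

lemma ft_mul_ft_neg_ofReal (f : ℝ → ℝ) (k : ℝ) :
    ft (fun u => (f u : ℂ)) k * ft (fun u => (f u : ℂ)) (-k)
      = ((‖ft (fun u => (f u : ℂ)) k‖ ^ 2 : ℝ) : ℂ) := by
  rw [ft_neg_ofReal, mul_conj']
  push_cast
  rfl

lemma ft_eq_fourier (F : ℝ → ℂ) (k : ℝ) : ft F k = 𝓕 F (k / (2 * π)) := by
  rw [Real.fourier_real_eq_integral_exp_smul, ft]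
  congr 1 with u
  rw [smul_eq_mul, mul_comm]
  congr 2
  push_cast
  field_simp

lemma integrable_norm_mul_norm_ft (g : 𝓢(ℝ, ℂ)) : Integrable (fun k => ‖k‖ * ‖ft g k‖) := by
  have h := (((𝓕 g).integrable_pow_mul volume 1).comp_div two_pi_pos.ne').const_mul (2 * π)
  refine h.congr (ae_of_all _ fun k => ?_)
  simp only [pow_one, ft_eq_fourier, SchwartzMap.fourier_coe, norm_div,
    Real.norm_of_nonneg two_pi_pos.le]
  field_simp

lemma integrable_mul_norm_ft_sq (g : 𝓢(ℝ, ℂ)) : Integrable (fun k => k * ‖ft g k‖ ^ 2) := by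
  refine ((integrable_norm_mul_norm_ft g).mul_const (∫ u, ‖g u‖)).mono'
    (by have := continuous_ft g.integrable; fun_prop) (ae_of_all _ fun k => ?_)
  rw [norm_mul, norm_pow, norm_norm, sq, ← mul_assoc]
  gcongr
  exact norm_ft_le g k

lemma cexp_neg_I_mul_sub (k u u' : ℝ) :
    cexp (-I * k * (u - u')) = cexp (-I * k * u) * cexp (-I * ↑(-k) * u') := by
  rw [← Complex.exp_add]
  push_cast
  ring_nf

section Fubini

variable {ν : Measure ℝ} [SFinite ν] {φ F G : ℝ → ℂ}

lemma integral_mul_integral_cexp_sub (hφ : Integrable φ ν) (hG : Integrable G) (u : ℝ) :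
    ∫ u' : ℝ, G u' * ∫ k : ℝ, φ k * cexp (-I * k * (u - u')) ∂ν
      = ∫ k : ℝ, cexp (-I * k * u) * (φ k * ft G (-k)) ∂ν := by
  have hint : Integrable (fun p : ℝ × ℝ => G p.1 * (φ p.2 * cexp (-I * p.2 * (u - p.1))))
      (volume.prod ν) := by
    refine (hG.norm.mul_prod hφ.norm).mono'
      (hG.aestronglyMeasurable.comp_fst.mul
        (hφ.aestronglyMeasurable.comp_snd.mul (Continuous.aestronglyMeasurable (by fun_prop))))
      (ae_of_all _ fun p => le_of_eq ?_)
    simp only [norm_mul, ← ofReal_sub, norm_cexp_neg_I_mul, mul_one]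
  calc ∫ u' : ℝ, G u' * ∫ k : ℝ, φ k * cexp (-I * k * (u - u')) ∂ν
      = ∫ u' : ℝ, ∫ k : ℝ, G u' * (φ k * cexp (-I * k * (u - u'))) ∂ν := by
        simp_rw [integral_const_mul]
    _ = ∫ k : ℝ, (∫ u' : ℝ, G u' * (φ k * cexp (-I * k * (u - u')))) ∂ν :=
        integral_integral_swap hint
    _ = ∫ k : ℝ, cexp (-I * k * u) * (φ k * ft G (-k)) ∂ν := by
        congr 1 with k
        rw [ft, ← integral_const_mul, ← integral_const_mul]
        refine integral_congr_ae (ae_of_all _ fun u' => ?_)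
        dsimp only
        rw [cexp_neg_I_mul_sub]
        ring

lemma integral_integral_mul_integral_cexp (hφ : Integrable φ ν) (hF : Integrable F)
    (hG : Integrable G) :
    ∫ u : ℝ, ∫ u' : ℝ, F u * G u' * ∫ k : ℝ, φ k * cexp (-I * k * (u - u')) ∂ν
      = ∫ k : ℝ, φ k * (ft F k * ft G (-k)) ∂ν := by
  have hint : Integrable (fun p : ℝ × ℝ => F p.1 * cexp (-I * p.2 * p.1) * (φ p.2 * ft G (-p.2)))
      (volume.prod ν) := by
    refine ((hF.norm.mul_prod hφ.norm).mul_const (∫ u, ‖G u‖)).mono'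
      ((hF.aestronglyMeasurable.comp_fst.mul (Continuous.aestronglyMeasurable (by fun_prop))).mul
        (hφ.aestronglyMeasurable.comp_snd.mul
          ((continuous_ft hG).comp continuous_snd.neg).aestronglyMeasurable))
      (ae_of_all _ fun p => ?_)
    simp only [norm_mul, norm_cexp_neg_I_mul, mul_one]
    rw [mul_assoc]
    gcongr
    exact norm_ft_le G _
  calc ∫ u : ℝ, ∫ u' : ℝ, F u * G u' * ∫ k : ℝ, φ k * cexp (-I * k * (u - u')) ∂ν
      = ∫ u : ℝ, ∫ k : ℝ, F u * cexp (-I * k * u) * (φ k * ft G (-k)) ∂ν := by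
        refine integral_congr_ae (ae_of_all _ fun u => ?_)
        simp only [mul_assoc (F u), integral_const_mul, integral_mul_integral_cexp_sub hφ hG]
    _ = ∫ k : ℝ, (∫ u : ℝ, F u * cexp (-I * k * u) * (φ k * ft G (-k))) ∂ν :=
        integral_integral_swap hint
    _ = ∫ k : ℝ, φ k * (ft F k * ft G (-k)) ∂ν := by
        congr 1 with k
        rw [integral_mul_const]
        exact mul_left_comm (ft F k) _ _

end Fubini

lemma integral_integral_mul_inv_sub_mul_I_sq {F G : ℝ → ℂ} (hF : Integrable F) (hG : Integrable G)
    {ε : ℝ} (hε : 0 < ε) :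
    ∫ u : ℝ, ∫ u' : ℝ, F u * G u' * (((u : ℂ) - (u' : ℂ) - ε * I) ^ 2)⁻¹
      = -∫ k in Ioi (0 : ℝ), (k : ℂ) * cexp (-(ε * k)) * (ft F k * ft G (-k)) := by
  have hker : ∀ u u' : ℝ, (((u : ℂ) - (u' : ℂ) - ε * I) ^ 2)⁻¹
      = -∫ k in Ioi (0 : ℝ), (k : ℂ) * cexp (-(ε * k)) * cexp (-I * k * (u - u')) := by
    intro u u'
    simpa using inv_sub_mul_I_sq_eq_neg_integral hε (u - u')
  have hφ := integrableOn_mul_cexp_neg_mul_Ioi (a := ε) (by simpa)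
  simp_rw [hker, mul_neg, integral_neg, integral_integral_mul_integral_cexp hφ hF hG]

/-- Positivity of the boundary two-point function: for a real-valued Schwartz
function `f`, the `ε → 0⁺` limit of `−(1/π)∬ f(u)f(u')(u − u' − iε)⁻² du' du`
equals `(1/π)∫₀^∞ k |f̂(k)|² dk`, which is non-negative. -/
theorem boundary_two_point_positivity (f : SchwartzMap ℝ ℝ) :
    Tendsto
      (fun ε : ℝ =>
        -(1 / (Real.pi : ℂ)) *
          ∫ u : ℝ, ∫ u' : ℝ,
            (f u : ℂ) * (f u' : ℂ) * (((u : ℂ) - (u' : ℂ) - ε * Complex.I) ^ 2)⁻¹)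
      (nhdsWithin 0 (Set.Ioi 0))
      (nhds (((1 / Real.pi *
        ∫ k in Set.Ioi (0 : ℝ), k * ‖ft (fun u => (f u : ℂ)) k‖ ^ 2 : ℝ) : ℂ))) ∧
    0 ≤ (1 / Real.pi) * ∫ k in Set.Ioi (0 : ℝ), k * ‖ft (fun u => (f u : ℂ)) k‖ ^ 2 := by
  have hF : Integrable (fun u => (f u : ℂ)) := (f.postcompCLM ofRealCLM).integrable
  have hspec : IntegrableOn (fun k => k * ‖ft (fun u => (f u : ℂ)) k‖ ^ 2) (Ioi 0) :=
    (integrable_mul_norm_ft_sq (f.postcompCLM ofRealCLM)).integrableOn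
  refine ⟨?_, mul_nonneg (by positivity)
    (setIntegral_nonneg measurableSet_Ioi fun k hk => mul_nonneg (le_of_lt hk) (sq_nonneg _))⟩
  have hlim := (continuous_ofReal.tendsto _).comp
    ((tendsto_setIntegral_exp_neg_mul_smul hspec).const_mul (1 / π))
  refine hlim.congr' ?_
  filter_upwards [self_mem_nhdsWithin] with ε (hε : 0 < ε)
  rw [integral_integral_mul_inv_sub_mul_I_sq hF hF hε]
  simp only [Function.comp_apply, ofReal_mul, ft_mul_ft_neg_ofReal, smul_eq_mul]
  rw [← integral_complex_ofReal, neg_mul_neg]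
  push_cast
  ring_nf
end

section
/- Let g : ℝ → ℂ be continuous with k ↦ (1 + |k|)·g(k) (absolutely) integrable on ℝ. Then lim_{T→0⁺} ∫_{ℝ∖{0}} (k/(1 − e^{−k/T})) g(k) dk = ∫_{0}^{∞} k g(k) dk. -/
/-!
Detailed balance `B_T(k) = k + B_T(-k)` reduces the Bose factor to `k ≤ 0`, where
`1 - k/T ≤ e^{-k/T}` gives `0 ≤ B_T(k) ≤ T`. Hence `max k 0 ≤ B_T(k) ≤ max k 0 + T`,
which yields both the pointwise limit `max k 0` and, for `T ≤ 1`, the domination of the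
integrand by `(1 + |k|) ‖g k‖`; dominated convergence concludes.
-/

open MeasureTheory Complex Filter

/-- Lean's `0 / 0 = 0` makes `boseFactor T 0 = 0`. -/
noncomputable def boseFactor (T k : ℝ) : ℝ :=
  k / (1 - Real.exp (-k / T))

section BoseFactor

variable {T : ℝ}

@[fun_prop]
theorem measurable_boseFactor (T : ℝ) : Measurable (boseFactor T) := by
  unfold boseFactor; fun_prop

theorem boseFactor_nonneg_of_nonpos (hT : 0 < T) {k : ℝ} (hk : k ≤ 0) : 0 ≤ boseFactor T k := by
  have : 1 ≤ Real.exp (-k / T) := Real.one_le_exp (div_nonneg (neg_nonneg.2 hk) hT.le)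
  exact div_nonneg_of_nonpos hk (by linarith)

theorem boseFactor_le_of_nonpos (hT : 0 < T) {k : ℝ} (hk : k ≤ 0) : boseFactor T k ≤ T := by
  rcases hk.lt_or_eq with hk | rfl
  · have hden : 1 - Real.exp (-k / T) < 0 := by
      linarith [Real.add_one_le_exp (-k / T), div_pos (neg_pos.2 hk) hT]
    have hexp := mul_le_mul_of_nonneg_left (Real.add_one_le_exp (-k / T)) hT.le
    have hlhs : T * (-k / T + 1) = T - k := by field_simp; ring
    rw [boseFactor, div_le_iff_of_neg hden]
    linarith
  · simp [boseFactor, hT.le]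

theorem boseFactor_eq_add_neg (hT : T ≠ 0) (k : ℝ) : boseFactor T k = k + boseFactor T (-k) := by
  rcases eq_or_ne k 0 with rfl | hk
  · simp [boseFactor]
  have hx : -k / T ≠ 0 := div_ne_zero (neg_ne_zero.2 hk) hT
  have hu : 1 - Real.exp (-k / T) ≠ 0 := by
    rw [sub_ne_zero, ne_comm, Ne, Real.exp_eq_one_iff]; exact hx
  have hv : 1 - Real.exp (-(-k / T)) ≠ 0 := by
    rw [sub_ne_zero, ne_comm, Ne, Real.exp_eq_one_iff]; exact neg_ne_zero.2 hx
  have huv : Real.exp (-k / T) * Real.exp (-(-k / T)) = 1 := by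
    rw [← Real.exp_add, add_neg_cancel, Real.exp_zero]
  rw [boseFactor, boseFactor, neg_div T (-k)]
  generalize Real.exp (-k / T) = u at *
  generalize Real.exp (-(-k / T)) = v at *
  field_simp
  linear_combination -huv

theorem max_zero_le_boseFactor (hT : 0 < T) (k : ℝ) : max k 0 ≤ boseFactor T k := by
  rcases le_or_gt k 0 with hk | hk
  · rw [max_eq_right hk]; exact boseFactor_nonneg_of_nonpos hT hk
  · rw [max_eq_left hk.le, boseFactor_eq_add_neg hT.ne']
    linarith [boseFactor_nonneg_of_nonpos hT (neg_nonpos.2 hk.le)]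

theorem boseFactor_le_max_zero_add (hT : 0 < T) (k : ℝ) : boseFactor T k ≤ max k 0 + T := by
  rcases le_or_gt k 0 with hk | hk
  · rw [max_eq_right hk, zero_add]; exact boseFactor_le_of_nonpos hT hk
  · rw [max_eq_left hk.le, boseFactor_eq_add_neg hT.ne']
    linarith [boseFactor_le_of_nonpos hT (neg_nonpos.2 hk.le)]

theorem abs_boseFactor_le (hT : 0 < T) (k : ℝ) : |boseFactor T k| ≤ |k| + T := by
  have h0 : 0 ≤ boseFactor T k := (le_max_right k 0).trans (max_zero_le_boseFactor hT k)
  rw [abs_of_nonneg h0]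
  exact (boseFactor_le_max_zero_add hT k).trans
    (by gcongr; exact max_le (le_abs_self k) (abs_nonneg k))

theorem tendsto_boseFactor_nhdsGT_zero (k : ℝ) :
    Tendsto (boseFactor · k) (nhdsWithin 0 (Set.Ioi 0)) (nhds (max k 0)) := by
  have hupper : Tendsto (fun T => max k 0 + T) (nhdsWithin 0 (Set.Ioi 0)) (nhds (max k 0)) := by
    simpa using (tendsto_const_nhds (x := max k 0)).add
      (tendsto_nhdsWithin_of_tendsto_nhds (tendsto_id (x := nhds (0 : ℝ))))
  refine tendsto_of_tendsto_of_tendsto_of_le_of_le' tendsto_const_nhds hupper ?_ ?_ <;>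
    filter_upwards [self_mem_nhdsWithin] with T hT
  exacts [max_zero_le_boseFactor hT k, boseFactor_le_max_zero_add hT k]

end BoseFactor

theorem integral_max_zero_mul_eq_setIntegral_Ioi (g : ℝ → ℂ) :
    ∫ k : ℝ, ((max k 0 : ℝ) : ℂ) * g k = ∫ k in Set.Ioi (0 : ℝ), (k : ℂ) * g k := by
  rw [← integral_indicator measurableSet_Ioi]
  congr 1 with k
  by_cases hk : 0 < k
  · simp [hk, max_eq_left hk.le]
  · simp [hk, max_eq_right (not_lt.1 hk)]

/-- Weak convergence of the thermal (Bose) densities to the vacuum density as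
the temperature tends to zero: for continuous `g : ℝ → ℂ` with
`(1 + |k|)·g(k)` absolutely integrable,
`∫_{ℝ∖{0}} (k/(1 − e^{−k/T})) g(k) dk → ∫₀^∞ k g(k) dk` as `T → 0⁺`. -/
theorem bose_factor_zero_temperature_limit (g : ℝ → ℂ) (hg : Continuous g)
    (hint : Integrable (fun k : ℝ => (1 + |k|) * ‖g k‖)) :
    Tendsto
      (fun T : ℝ => ∫ k in {(0 : ℝ)}ᶜ, ((k / (1 - Real.exp (-k / T)) : ℝ) : ℂ) * g k)
      (nhdsWithin 0 (Set.Ioi 0))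
      (nhds (∫ k in Set.Ioi (0 : ℝ), (k : ℂ) * g k)) := by
  simp only [restrict_compl_singleton, ← integral_max_zero_mul_eq_setIntegral_Ioi]
  change Tendsto (fun T => ∫ k, (boseFactor T k : ℂ) * g k) _ _
  refine tendsto_integral_filter_of_dominated_convergence _ ?_ ?_ hint ?_
  · exact .of_forall fun T => by fun_prop
  · filter_upwards [Ioc_mem_nhdsGT zero_lt_one] with T ⟨hT0, hT1⟩
    refine .of_forall fun k => ?_
    rw [norm_mul, Complex.norm_real, Real.norm_eq_abs, add_comm]
    gcongr
    exact (abs_boseFactor_le hT0 k).trans (by gcongr)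
  · exact .of_forall fun k =>
      ((continuous_ofReal.tendsto _).comp (tendsto_boseFactor_nhdsGT_zero k)).mul_const (g k)
end
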